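/- arXiv:2506.01193 — 7 statements merged into one kernel-verified Lean document; each statement's English description precedes it below -/
import Mathlib

section
/- For any n×n complex matrix A and every integer j ≥ 0, the double-argument formula holds: φ_j(2A) = 2^{-j} ( φ_0(A)·φ_j(A) + Σ_{k=1}^{j} φ_k(A)/(j−k)! ). -/
noncomputable def phiMat {n : ℕ} (j : ℕ) (A : Matrix (Fin n) (Fin n) ℂ) :
    Matrix (Fin n) (Fin n) ℂ :=
  if j = 0 then NormedSpace.exp A
  else ∑' k : ℕ, (((k + j).factorial : ℂ))⁻¹ • A ^ k

/-!
Both sides are power series in `A`. Since `φ_j(A) = ∑ₘ Aᵐ/(m+j)!`, the coefficient of `Aᵐ` in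
`2ʲ φ_j(2A)` is `2^(m+j)/(m+j)! = ∑_{i=0}^{m+j} 1/(i! (m+j-i)!)`. In the Cauchy product
`exp(A) φ_j(A)` the coefficient of `Aᵐ` is the part `i ≤ m` of this binomial sum, and
`∑_{k=1}^{j} φ_k(A)/(j-k)!` contributes exactly the remaining terms `i = m + k`.
-/

open Finset NormedSpace
open scoped Nat

section Coefficients

variable {K : Type*} [Field K] [CharZero K]

theorem sum_range_inv_factorial_mul_inv_factorial_sub (N : ℕ) :
    ∑ i ∈ range (N + 1), ((i ! : K))⁻¹ * (((N - i)! : K))⁻¹ = 2 ^ N * ((N ! : K))⁻¹ := by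
  have hterm : ∀ i ∈ range (N + 1),
      ((i ! : K))⁻¹ * (((N - i)! : K))⁻¹ = (N.choose i : K) * ((N ! : K))⁻¹ := by
    intro i hi
    have hN : (N ! : K) ≠ 0 := Nat.cast_ne_zero.mpr N.factorial_ne_zero
    rw [Nat.cast_choose K (Nat.lt_succ_iff.mp (mem_range.mp hi))]
    field_simp
  rw [sum_congr rfl hterm, ← sum_mul, ← Nat.cast_sum, Nat.sum_range_choose, Nat.cast_pow,
    Nat.cast_ofNat]

theorem sum_antidiagonal_add_sum_Icc_inv_factorial (m j : ℕ) :
    (∑ pq ∈ antidiagonal m, ((pq.1 ! : K))⁻¹ * (((pq.2 + j)! : K))⁻¹)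
      + ∑ k ∈ Icc 1 j, (((j - k)! : K))⁻¹ * (((m + k)! : K))⁻¹
    = 2 ^ (m + j) * (((m + j)! : K))⁻¹ := by
  set g : ℕ → K := fun i ↦ ((i ! : K))⁻¹ * (((m + j - i)! : K))⁻¹
  have hlow : ∑ pq ∈ antidiagonal m, ((pq.1 ! : K))⁻¹ * (((pq.2 + j)! : K))⁻¹
      = ∑ i ∈ range (m + 1), g i := by
    rw [Nat.sum_antidiagonal_eq_sum_range_succ_mk]
    refine sum_congr rfl fun i hi ↦ ?_
    have : m - i + j = m + j - i := by have := mem_range.mp hi; omega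
    simp only [g, this]
  have hhigh : ∑ k ∈ Icc 1 j, (((j - k)! : K))⁻¹ * (((m + k)! : K))⁻¹
      = ∑ x ∈ range j, g (m + 1 + x) := by
    rw [← Ico_add_one_right_eq_Icc, sum_Ico_eq_sum_range, Nat.add_sub_cancel]
    refine sum_congr rfl fun x _ ↦ ?_
    have h1 : j - (1 + x) = m + j - (m + 1 + x) := by omega
    have h2 : m + (1 + x) = m + 1 + x := by omega
    simp only [g, h1, h2, mul_comm]
  rw [hlow, hhigh, ← sum_range_add, Nat.add_right_comm,
    ← sum_range_inv_factorial_mul_inv_factorial_sub]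

end Coefficients

section BanachAlgebra

variable {𝕂 𝔸 : Type*} [RCLike 𝕂] [NormedRing 𝔸] [NormedAlgebra 𝕂 𝔸]

theorem summable_norm_inv_factorial_add_smul_pow (j : ℕ) (a : 𝔸) :
    Summable fun k ↦ ‖(((k + j)! : 𝕂))⁻¹ • a ^ k‖ := by
  refine (norm_expSeries_summable' (𝕂 := 𝕂) a).of_nonneg_of_le (fun _ ↦ norm_nonneg _)
    fun k ↦ ?_
  rw [norm_smul, norm_smul, norm_inv, norm_inv, RCLike.norm_natCast, RCLike.norm_natCast]
  gcongr
  exact Nat.le_add_right k j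

variable [CompleteSpace 𝔸]

theorem hasSum_tsum_smul_pow_mul_tsum_smul_pow {c d : ℕ → 𝕂} {a : 𝔸}
    (hc : Summable fun k ↦ ‖c k • a ^ k‖) (hd : Summable fun k ↦ ‖d k • a ^ k‖) :
    HasSum (fun m ↦ (∑ pq ∈ antidiagonal m, c pq.1 * d pq.2) • a ^ m)
      ((∑' k, c k • a ^ k) * ∑' k, d k • a ^ k) := by
  have hterm : ∀ m, ∑ pq ∈ antidiagonal m, c pq.1 • a ^ pq.1 * d pq.2 • a ^ pq.2
      = (∑ pq ∈ antidiagonal m, c pq.1 * d pq.2) • a ^ m := by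
    intro m
    rw [sum_smul]
    refine sum_congr rfl fun pq hpq ↦ ?_
    rw [smul_mul_smul_comm, ← pow_add, mem_antidiagonal.mp hpq]
  rw [tsum_mul_tsum_eq_tsum_sum_antidiagonal_of_summable_norm hc hd, ← funext hterm]
  exact (summable_norm_sum_mul_antidiagonal_of_summable_norm hc hd).of_norm.hasSum

end BanachAlgebra

section Matrix

-- Any norm on matrices will do: its topology is the product topology in which `phiMat` is summed.
attribute [local instance] Matrix.linftyOpNormedRing Matrix.linftyOpNormedAlgebra

theorem hasSum_phiMat {n : ℕ} (j : ℕ) (A : Matrix (Fin n) (Fin n) ℂ) :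
    HasSum (fun k ↦ (((k + j)! : ℂ))⁻¹ • A ^ k) (phiMat j A) := by
  by_cases hj : j = 0
  · subst hj
    rw [phiMat, if_pos rfl]
    exact exp_series_hasSum_exp' (𝕂 := ℂ) A
  · rw [phiMat, if_neg hj]
    exact (summable_norm_inv_factorial_add_smul_pow j A).of_norm.hasSum

/-- Double-argument formula:
`φ_j(2A) = 2^{-j} (φ_0(A)·φ_j(A) + ∑_{k=1}^{j} φ_k(A)/(j−k)!)`. -/
theorem phiMat_double_argument {n : ℕ} (A : Matrix (Fin n) (Fin n) ℂ) (j : ℕ) :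
    phiMat j ((2 : ℂ) • A) =
      ((2 : ℂ) ^ j)⁻¹ •
        (phiMat 0 A * phiMat j A +
          ∑ k ∈ Finset.Icc 1 j, (((j - k).factorial : ℂ))⁻¹ • phiMat k A) := by
  have hprod : HasSum
      (fun m ↦ (∑ pq ∈ antidiagonal m, ((pq.1 ! : ℂ))⁻¹ * (((pq.2 + j)! : ℂ))⁻¹) • A ^ m)
      (phiMat 0 A * phiMat j A) := by
    have hexp : HasSum (fun k ↦ ((k ! : ℂ))⁻¹ • A ^ k) (phiMat 0 A) := hasSum_phiMat 0 A
    rw [← hexp.tsum_eq, ← (hasSum_phiMat j A).tsum_eq]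
    exact hasSum_tsum_smul_pow_mul_tsum_smul_pow (c := fun k ↦ ((k ! : ℂ))⁻¹)
      (d := fun k ↦ (((k + j)! : ℂ))⁻¹) (summable_norm_inv_factorial_add_smul_pow 0 A)
      (summable_norm_inv_factorial_add_smul_pow j A)
  have hfinite : HasSum
      (fun m ↦ (∑ k ∈ Icc 1 j, (((j - k)! : ℂ))⁻¹ * (((m + k)! : ℂ))⁻¹) • A ^ m)
      (∑ k ∈ Icc 1 j, (((j - k)! : ℂ))⁻¹ • phiMat k A) := by
    simp only [sum_smul, mul_smul]
    exact hasSum_sum fun k _ ↦ (hasSum_phiMat k A).const_smul _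
  have hdouble := (hasSum_phiMat j ((2 : ℂ) • A)).const_smul ((2 : ℂ) ^ j)
  rw [eq_inv_smul_iff₀ (pow_ne_zero j two_ne_zero)]
  refine hdouble.unique ((hprod.add hfinite).congr_fun fun m ↦ ?_)
  rw [← add_smul, sum_antidiagonal_add_sum_Icc_inv_factorial, smul_pow, smul_smul, smul_smul,
    pow_add]
  congr 1
  ring

end Matrix
end

section
/- For every complex number z and integer j ≥ 0, the scalar double-argument formula holds: φ_j(2z) = 2^{-j} ( e^z·φ_j(z) + Σ_{k=1}^{j} φ_k(z)/(j−k)! ). -/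
/-!
Multiplying the formula for `j + 1` by `2z` and using the recurrence
`z φ_{j+1}(z) = φ_j(z) - 1/j!` (for both `z` and `2z`) reduces it to the formula for `j`;
the constant terms cancel by the binomial identity `∑_{k ≤ j} 1/(k! (j-k)!) = 2^j/j!`.
The induction starts from `e^{2z} = e^z e^z`, and the cancellation of `2z` forces the
case `z = 0` to be treated apart, where the formula is the binomial identity itself.
-/

/-- The `φ`-functions: `φ_0(z) = e^z` and `φ_j(z) = ∑_{k=0}^∞ z^k/(k+j)!` for `j ≥ 1`. -/
noncomputable def phiFun (j : ℕ) (z : ℂ) : ℂ :=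
  if j = 0 then Complex.exp z else ∑' k : ℕ, z ^ k / ((k + j).factorial : ℂ)

open Finset Nat

section SumShift

variable {M : Type*} [AddCommMonoid M] (f : ℕ → M) (n : ℕ)

lemma Finset.sum_Icc_one_eq_sum_range : ∑ k ∈ Icc 1 n, f k = ∑ i ∈ range n, f (i + 1) := by
  rw [← Ico_add_one_right_eq_Icc, sum_Ico_eq_sum_range]
  simp only [add_comm 1, add_tsub_cancel_right]

lemma Finset.sum_range_succ_eq_add_sum_Icc :
    ∑ k ∈ range (n + 1), f k = f 0 + ∑ k ∈ Icc 1 n, f k := by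
  rw [sum_Icc_one_eq_sum_range, sum_range_succ']
  exact add_comm _ _

end SumShift

lemma sum_range_inv_factorial_mul_factorial (n : ℕ) :
    ∑ k ∈ range (n + 1), ((k ! : ℂ) * (n - k)!)⁻¹ = 2 ^ n / n ! := by
  have hchoose : ∀ k ∈ range (n + 1), ((k ! : ℂ) * (n - k)!)⁻¹ = n.choose k / n ! := by
    intro k hk
    have : (n ! : ℂ) ≠ 0 := mod_cast n.factorial_ne_zero
    rw [cast_choose ℂ (mem_range_succ_iff.mp hk)]
    field_simp
  rw [sum_congr rfl hchoose, ← sum_div]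
  exact_mod_cast congrArg (fun m : ℕ => (m : ℂ) / n !) (sum_range_choose n)

lemma summable_pow_div_factorial_add (j : ℕ) (z : ℂ) :
    Summable fun k : ℕ => z ^ k / ((k + j)! : ℂ) := by
  refine Summable.of_norm_bounded (Real.summable_pow_div_factorial ‖z‖) fun k => ?_
  rw [norm_div, norm_pow, Complex.norm_natCast]
  gcongr
  exact le_add_right k j

lemma phiFun_zero (z : ℂ) : phiFun 0 z = Complex.exp z := if_pos rfl

lemma phiFun_eq_tsum (j : ℕ) (z : ℂ) : phiFun j z = ∑' k : ℕ, z ^ k / ((k + j)! : ℂ) := by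
  rcases eq_or_ne j 0 with rfl | hj
  · simp [phiFun_zero, Complex.exp_eq_exp_ℂ, NormedSpace.exp_eq_tsum_div]
  · exact if_neg hj

lemma phiFun_apply_zero (j : ℕ) : phiFun j 0 = (j ! : ℂ)⁻¹ := by
  rw [phiFun_eq_tsum, tsum_eq_single 0 fun k hk => by simp [zero_pow hk]]
  simp

lemma mul_phiFun_succ (j : ℕ) (z : ℂ) : z * phiFun (j + 1) z = phiFun j z - (j ! : ℂ)⁻¹ := by
  rw [phiFun_eq_tsum, phiFun_eq_tsum, ← tsum_mul_left,
    (summable_pow_div_factorial_add j z).tsum_eq_zero_add]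
  simp only [pow_zero, zero_add, one_div, add_sub_cancel_left]
  congr 1 with k
  rw [mul_div_assoc', _root_.pow_succ', add_right_comm, add_assoc]

noncomputable def phiSum (j : ℕ) (z : ℂ) : ℂ := ∑ k ∈ Icc 1 j, phiFun k z / ((j - k)! : ℂ)

lemma mul_phiSum_succ (j : ℕ) (z : ℂ) :
    z * phiSum (j + 1) z = Complex.exp z / j ! + phiSum j z - 2 ^ j / j ! := by
  have hterm : ∀ i ∈ range (j + 1), z * (phiFun (i + 1) z / ((j + 1 - (i + 1))! : ℂ)) =
      phiFun i z / ((j - i)! : ℂ) - ((i ! : ℂ) * (j - i)!)⁻¹ := by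
    intro i _
    rw [Nat.add_sub_add_right, mul_div_assoc', mul_phiFun_succ]
    ring
  rw [phiSum, sum_Icc_one_eq_sum_range, mul_sum, sum_congr rfl hterm, sum_sub_distrib,
    sum_range_succ_eq_add_sum_Icc, sum_range_inv_factorial_mul_factorial, phiFun_zero,
    Nat.sub_zero, phiSum]

lemma phiFun_double_argument_apply_zero (j : ℕ) :
    phiFun j 0 = ((2 : ℂ) ^ j)⁻¹ * (phiFun j 0 + phiSum j 0) := by
  have hsum := sum_range_inv_factorial_mul_factorial j
  rw [sum_range_succ_eq_add_sum_Icc] at hsum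
  simp only [phiSum, phiFun_apply_zero, div_eq_mul_inv _ (_ : ℂ), ← mul_inv]
  simp only [Nat.factorial_zero, Nat.cast_one, one_mul, Nat.sub_zero] at hsum
  rw [hsum]
  field_simp

/-- Scalar double-argument formula:
`φ_j(2z) = 2^{-j} (e^z·φ_j(z) + ∑_{k=1}^{j} φ_k(z)/(j−k)!)`. -/
theorem phi_double_argument (z : ℂ) (j : ℕ) :
    phiFun j (2 * z) =
      ((2 : ℂ) ^ j)⁻¹ *
        (Complex.exp z * phiFun j z +
          ∑ k ∈ Finset.Icc 1 j, phiFun k z / (((j - k).factorial : ℂ))) := by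
  rcases eq_or_ne z 0 with rfl | hz
  · rw [mul_zero, Complex.exp_zero, one_mul]
    exact phiFun_double_argument_apply_zero j
  change phiFun j (2 * z) = ((2 : ℂ) ^ j)⁻¹ * (Complex.exp z * phiFun j z + phiSum j z)
  induction j with
  | zero => simp [phiSum, phiFun_zero, two_mul, Complex.exp_add]
  | succ j ih =>
    refine mul_left_cancel₀ (mul_ne_zero two_ne_zero hz) ?_
    have hpow : ((2 : ℂ) ^ j)⁻¹ * 2 ^ j = 1 := inv_mul_cancel₀ (pow_ne_zero _ two_ne_zero)
    rw [pow_succ, mul_inv]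
    linear_combination mul_phiFun_succ j (2 * z) + ih
      - ((2 : ℂ) ^ j)⁻¹ * Complex.exp z * mul_phiFun_succ j z
      - ((2 : ℂ) ^ j)⁻¹ * mul_phiSum_succ j z + (j ! : ℂ)⁻¹ * hpow
end

section
/- Let A ∈ ℂ^{n×n}, let f be given by a power series f(z) = Σ_{k≥0} c_k z^k with radius of convergence exceeding the spectral radius of A, and let J = J_p(0) ⊗ I_n and E = e_1^T ⊗ I_n ∈ ℂ^{n×np}. Then the (1,2) block of f applied to W = [[A, E],[0, J]] equals [g_1(A), g_2(A), ..., g_p(A)] where g_i(A) = Σ_{k≥i} c_k A^{k−i}. -/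
open scoped NNReal

/-- The block upper triangular matrix `W = [[A, E],[0, J]]` with
`E = e_1^T ⊗ I_n ∈ ℂ^{n×np}` and `J = J_p(0) ⊗ I_n`:  block `(0,0)` is `A` and the
blocks on the block superdiagonal are identities; all other blocks vanish. -/
noncomputable def blockW {n : ℕ} (p : ℕ) (A : Matrix (Fin n) (Fin n) ℂ) :
    Matrix (Fin (p + 1) × Fin n) (Fin (p + 1) × Fin n) ℂ :=
  fun x y =>
    if x.1 = 0 ∧ y.1 = 0 then A x.2 y.2
    else if (y.1 : ℕ) = (x.1 : ℕ) + 1 then (if x.2 = y.2 then 1 else 0) else 0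

/-!
Right multiplication by `W` acts on block columns: block column `0` of `M * W` is block
column `0` of `M` times `A`, and block column `j + 1` is block column `j` of `M`. Hence block
`(0, j)` of `W ^ k` is `A ^ (k - j)` for `j ≤ k` and `0` otherwise, while the other block rows
of `W ^ k` vanish once `k > p`. For `r` above the spectral radius of `A`, Gelfand's formula
gives `‖A ^ k‖ ≤ r ^ k` eventually, so all entry series of `∑ c_k W ^ k` converge, and its
`(0, j)` block is `∑_{k ≥ j} c_k A ^ (k - j)`.
-/

open Filter

theorem Summable.mul_pow_nat_add {𝕜 : Type*} [NormedField 𝕜] {f : ℕ → 𝕜} {r : 𝕜} (hr : r ≠ 0)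
    (hf : Summable fun k => f k * r ^ k) (m : ℕ) : Summable fun k => f (k + m) * r ^ k := by
  refine (((summable_nat_add_iff m).2 hf).div_const (r ^ m)).congr fun k => ?_
  rw [pow_add, ← mul_assoc, mul_div_cancel_right₀ _ (pow_ne_zero m hr)]

theorem Matrix.tsum_apply {X m n R : Type*} [AddCommMonoid R] [TopologicalSpace R] [T2Space R]
    {f : X → Matrix m n R} (hf : Summable f) (i : m) (j : n) :
    (∑' x, f x) i j = ∑' x, f x i j :=
  (Pi.hasSum.1 (Pi.hasSum.1 hf.hasSum i) j).tsum_eq.symm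

section BanachAlgebra

variable {R : Type*} [NormedRing R] [NormedAlgebra ℂ R] [CompleteSpace R]

theorem eventually_nnnorm_pow_lt_of_spectralRadius_lt {a : R} {r : ℝ≥0}
    (hr : spectralRadius ℂ a < r) : ∀ᶠ k in atTop, ‖a ^ k‖₊ < r ^ k := by
  filter_upwards [(spectrum.pow_nnnorm_pow_one_div_tendsto_nhds_spectralRadius a).eventually_lt_const
    hr, eventually_gt_atTop 0] with k hk hk0
  rw [one_div, ENNReal.rpow_inv_lt_iff (by positivity), ENNReal.rpow_natCast] at hk
  exact_mod_cast hk

theorem summable_smul_pow_of_spectralRadius_lt {a : R} {c : ℕ → ℂ} {r : ℝ≥0}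
    (hr : spectralRadius ℂ a < r) (hc : Summable fun k => ‖c k‖ * (r : ℝ) ^ k) :
    Summable fun k => c k • a ^ k := by
  refine Summable.of_norm_bounded_eventually_nat hc ?_
  filter_upwards [eventually_nnnorm_pow_lt_of_spectralRadius_lt hr] with k hk
  rw [norm_smul]
  gcongr
  exact_mod_cast hk.le

end BanachAlgebra

/- Any Banach algebra norm on matrices will do, since summability only depends on the
topology; we borrow the `L∞` operator norm. -/
theorem Matrix.summable_smul_pow_of_spectralRadius_lt {m : Type*} [Fintype m] [DecidableEq m]
    {A : Matrix m m ℂ} {c : ℕ → ℂ} {r : ℝ≥0}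
    (hr : spectralRadius ℂ A < r) (hc : Summable fun k => ‖c k‖ * (r : ℝ) ^ k) :
    Summable fun k => c k • A ^ k :=
  letI := Matrix.linftyOpNormedRing (n := m) (α := ℂ)
  letI := Matrix.linftyOpNormedAlgebra (R := ℂ) (n := m) (α := ℂ)
  _root_.summable_smul_pow_of_spectralRadius_lt hr hc

section blockW

variable {n p : ℕ} (A : Matrix (Fin n) (Fin n) ℂ)

theorem mul_blockW_apply_zero {ι : Type*} (M : Matrix ι (Fin (p + 1) × Fin n) ℂ) (x : ι)
    (b : Fin n) : (M * blockW p A) x (0, b) = ∑ z, M x (0, z) * A z b := by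
  simp [Matrix.mul_apply, Fintype.sum_prod_type, blockW]

theorem mul_blockW_apply_succ {ι : Type*} (M : Matrix ι (Fin (p + 1) × Fin n) ℂ) (x : ι)
    (j : Fin p) (b : Fin n) : (M * blockW p A) x (j.succ, b) = M x (j.castSucc, b) := by
  rw [Matrix.mul_apply, Finset.sum_eq_single (j.castSucc, b)]
  · simp [blockW]
  · rintro ⟨i, a⟩ - hia
    simp only [blockW, Fin.succ_ne_zero, and_false, ↓reduceIte, Fin.val_succ,
      Nat.add_right_cancel_iff, mul_ite, mul_one, mul_zero, ite_eq_right_iff]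
    rintro hji rfl
    exact (hia (Prod.ext (Fin.ext hji.symm) rfl)).elim
  · simp

theorem blockW_pow_apply_zero_left (k : ℕ) (j : Fin (p + 1)) (a b : Fin n) :
    (blockW p A ^ k) (0, a) (j, b) = if (j : ℕ) ≤ k then (A ^ (k - j)) a b else 0 := by
  induction k generalizing j b with
  | zero => cases j using Fin.cases <;> simp [Matrix.one_apply, (Fin.succ_ne_zero _).symm]
  | succ k ih =>
    rw [pow_succ]
    cases j using Fin.cases with
    | zero =>
      rw [mul_blockW_apply_zero]
      simp [ih, pow_succ, Matrix.mul_apply]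
    | succ j => simp [mul_blockW_apply_succ, ih]

theorem blockW_pow_apply_of_ne_zero (k : ℕ) {i : Fin (p + 1)} (hi : i ≠ 0) (j : Fin (p + 1))
    (a b : Fin n) :
    (blockW p A ^ k) (i, a) (j, b) = if (j : ℕ) = i + k ∧ a = b then 1 else 0 := by
  induction k generalizing j b with
  | zero => simp [Matrix.one_apply, Fin.ext_iff, eq_comm]
  | succ k ih =>
    rw [pow_succ]
    cases j using Fin.cases with
    | zero =>
      have hik : 0 ≠ (i : ℕ) + k := by have := Fin.val_ne_zero_iff.mpr hi; omega
      rw [mul_blockW_apply_zero]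
      simp [ih, hik]
    | succ j => simp [mul_blockW_apply_succ, ih, ← add_assoc]

theorem summable_smul_blockW_pow {c : ℕ → ℂ} (hA : ∀ m, Summable fun k => c (k + m) • A ^ k) :
    Summable fun k => c k • blockW p A ^ k := by
  refine Pi.summable.2 fun ⟨i, a⟩ => Pi.summable.2 fun ⟨j, b⟩ => ?_
  by_cases hi : i = 0
  · subst hi
    rw [← summable_nat_add_iff j]
    simpa [blockW_pow_apply_zero_left] using Pi.summable.1 (Pi.summable.1 (hA j) a) b
  · refine summable_of_ne_finset_zero (s := Finset.range (j + 1)) fun k hk => ?_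
    simp only [Finset.mem_range] at hk
    simp [blockW_pow_apply_of_ne_zero A k hi]
    omega

end blockW

theorem blockW_offdiagonal_blocks_general {n : ℕ} (p : ℕ) (A : Matrix (Fin n) (Fin n) ℂ)
    (c : ℕ → ℂ)
    (hradius : ∃ r : ℝ≥0, spectralRadius ℂ A < (r : ENNReal) ∧
      Summable fun k : ℕ => ‖c k‖ * (r : ℝ) ^ k)
    (j : Fin (p + 1)) (a b : Fin n) :
    (∑' k : ℕ, c k • (blockW p A) ^ k) (0, a) (j, b) =
      (∑' k : ℕ, c (k + (j : ℕ)) • A ^ k) a b := by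
  obtain ⟨r, hr, hc⟩ := hradius
  have hr0 : (r : ℝ) ≠ 0 := NNReal.coe_ne_zero.2 (ENNReal.coe_pos.1 (zero_le.trans_lt hr)).ne'
  have hA : ∀ m, Summable fun k => c (k + m) • A ^ k := fun m =>
    Matrix.summable_smul_pow_of_spectralRadius_lt hr (hc.mul_pow_nat_add hr0 m)
  have hW := summable_smul_blockW_pow (p := p) A hA
  have hhead : ∑ k ∈ Finset.range j, (c k • blockW p A ^ k) (0, a) (j, b) = 0 :=
    Finset.sum_eq_zero fun k hk => by
      simp [blockW_pow_apply_zero_left, not_le.2 (Finset.mem_range.1 hk)]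
  rw [Matrix.tsum_apply hW, Matrix.tsum_apply (hA j),
    ← (Pi.summable.1 (Pi.summable.1 hW _) _).sum_add_tsum_nat_add j, hhead, zero_add]
  simp [blockW_pow_apply_zero_left]

/-- Let `f(z) = ∑_{k≥0} c_k z^k` have radius of convergence exceeding the spectral
radius of `A`. Then the `(1,2)` block of `f(W)`, `W = [[A, E],[0, J]]`, equals
`[g_1(A), g_2(A), …, g_p(A)]` where `g_i(A) = ∑_{k≥i} c_k A^{k−i}`. -/
theorem blockW_offdiagonal_blocks {n : ℕ} (p : ℕ) (A : Matrix (Fin n) (Fin n) ℂ)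
    (c : ℕ → ℂ)
    (hradius : ∃ r : ℝ≥0, spectralRadius ℂ A < (r : ENNReal) ∧
      Summable fun k : ℕ => ‖c k‖ * (r : ℝ) ^ k)
    (j : Fin (p + 1)) (hj : j ≠ 0) (a b : Fin n) :
    (∑' k : ℕ, c k • (blockW p A) ^ k) (0, a) (j, b) =
      (∑' k : ℕ, c (k + (j : ℕ)) • A ^ k) a b :=
  blockW_offdiagonal_blocks_general p A c hradius j a b
end

section
/- Let h be an analytic function on a neighborhood of 0 with h(z) = Σ_{k≥K} c_k z^k for some K ≥ 1, and define h̃(θ) = Σ_{k≥K} |c_k| θ^k. Then for any n×n complex matrix X and any r ≥ 1 with K ≥ r(r−1), ‖h(X)‖ ≤ h̃(α_r(X)) where α_r(X) = max(‖X^r‖^{1/r}, ‖X^{r+1}‖^{1/(r+1)}) and ‖·‖ is any submultiplicative matrix norm, provided α_r(X) is within the radius of convergence of h̃. -/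
/-! Every `k ≥ r(r-1)` lies in the additive monoid generated by `r` and `r + 1` (the two-coin
Frobenius problem), and `{k | ‖X^k‖ ≤ α^k}` is such a monoid by submultiplicativity (with
`‖1‖ ≤ 1`) and contains `r` and `r + 1` by the choice of `α = α_r(X)`. So every term of the
series for `h(X)` is bounded by the corresponding term of `h̃(α)`. -/

attribute [local instance] Matrix.linftyOpNormedAddCommGroup Matrix.linftyOpNormedRing

/-- `α_r(X) = max(‖X^r‖^{1/r}, ‖X^{r+1}‖^{1/(r+1)})` (for the `ℓ∞` operator norm,
a submultiplicative matrix norm). -/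
noncomputable def alphaR {n : ℕ} (X : Matrix (Fin n) (Fin n) ℂ) (r : ℕ) : ℝ :=
  max (‖X ^ r‖ ^ ((r : ℝ))⁻¹) (‖X ^ (r + 1)‖ ^ (((r : ℝ) + 1))⁻¹)

attribute [local instance] Matrix.linftyOpNormedSpace

theorem Nat.mem_closure_pair_succ_of_mul_pred_le {r k : ℕ} (hk : r * (r - 1) ≤ k) :
    k ∈ AddSubmonoid.closure {r, r + 1} := by
  obtain ⟨a, b, hab⟩ := exists_add_mul_eq_of_gcd_dvd_of_mul_pred_le r (r + 1) k
    (by simp) (by simpa [mul_comm] using hk)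
  exact (AddSubmonoid.mem_closure_pair _ _ _).2 ⟨a, b, by simpa using hab⟩

theorem norm_pow_le_pow_of_mem_closure {R : Type*} [SeminormedRing R] {x : R} {α : ℝ}
    (h1 : ‖(1 : R)‖ ≤ 1) {s : Set ℕ} (hs : ∀ k ∈ s, ‖x ^ k‖ ≤ α ^ k) {k : ℕ}
    (hk : k ∈ AddSubmonoid.closure s) : ‖x ^ k‖ ≤ α ^ k := by
  induction hk using AddSubmonoid.closure_induction with
  | mem k hk => exact hs k hk
  | zero => simpa using h1
  | add i j _ _ hi hj =>
    rw [pow_add, pow_add]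
    exact (norm_mul_le _ _).trans (mul_le_mul hi hj (norm_nonneg _) ((norm_nonneg _).trans hi))

theorem norm_tsum_smul_pow_le {𝕜 A : Type*} [NormedField 𝕜] [SeminormedRing A] [NormedSpace 𝕜 A]
    (c : ℕ → 𝕜) (x : A) {α : ℝ} (hx : ∀ k, c k ≠ 0 → ‖x ^ k‖ ≤ α ^ k)
    (hc : Summable fun k => ‖c k‖ * α ^ k) :
    ‖∑' k, c k • x ^ k‖ ≤ ∑' k, ‖c k‖ * α ^ k := by
  refine tsum_of_norm_bounded hc.hasSum fun k => ?_
  by_cases hck : c k = 0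
  · simp [hck]
  · exact (norm_smul_le _ _).trans (mul_le_mul_of_nonneg_left (hx k hck) (norm_nonneg _))

theorem Real.le_pow_of_rpow_inv_le {a b : ℝ} (ha : 0 ≤ a) {m : ℕ} (hm : m ≠ 0)
    (h : a ^ (m : ℝ)⁻¹ ≤ b) : a ≤ b ^ m := by
  rw [Real.rpow_inv_le_iff_of_pos ha ((Real.rpow_nonneg ha _).trans h) (by positivity)] at h
  exact_mod_cast h

theorem Matrix.linfty_opNorm_one_le {m α : Type*} [Fintype m] [DecidableEq m] [NormedRing α]
    [NormOneClass α] : ‖(1 : Matrix m m α)‖ ≤ 1 := by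
  rw [← Matrix.diagonal_one, Matrix.linfty_opNorm_diagonal]
  exact pi_norm_le_iff_of_nonneg zero_le_one |>.2 fun _ => by simp

section alphaR

variable {n : ℕ} (X : Matrix (Fin n) (Fin n) ℂ) (r : ℕ)

theorem alphaR_nonneg : 0 ≤ alphaR X r :=
  (Real.rpow_nonneg (norm_nonneg _) _).trans (le_max_left _ _)

theorem norm_pow_le_alphaR_pow : ‖X ^ r‖ ≤ alphaR X r ^ r := by
  rcases eq_or_ne r 0 with rfl | hr
  · simpa using Matrix.linfty_opNorm_one_le
  · exact Real.le_pow_of_rpow_inv_le (norm_nonneg _) hr (le_max_left _ _)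

theorem norm_pow_succ_le_alphaR_pow : ‖X ^ (r + 1)‖ ≤ alphaR X r ^ (r + 1) :=
  Real.le_pow_of_rpow_inv_le (norm_nonneg _) r.succ_ne_zero <| by
    rw [Nat.cast_succ]; exact le_max_right _ _

theorem norm_pow_le_alphaR_pow_of_mul_pred_le {k : ℕ} (hk : r * (r - 1) ≤ k) :
    ‖X ^ k‖ ≤ alphaR X r ^ k := by
  refine norm_pow_le_pow_of_mem_closure (Matrix.linfty_opNorm_one_le) ?_
    (Nat.mem_closure_pair_succ_of_mul_pred_le hk)
  simp only [Set.mem_insert_iff, Set.mem_singleton_iff, forall_eq_or_imp, forall_eq]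
  exact ⟨norm_pow_le_alphaR_pow X r, norm_pow_succ_le_alphaR_pow X r⟩

end alphaR

theorem norm_h_le_htilde_alpha_general {n : ℕ} (c : ℕ → ℂ) (K r : ℕ)
    (hc : ∀ k, k < K → c k = 0) (hKr : r * (r - 1) ≤ K)
    (X : Matrix (Fin n) (Fin n) ℂ)
    (hradius : ∃ t : ℝ, alphaR X r < t ∧ Summable fun k : ℕ => ‖c k‖ * t ^ k) :
    ‖∑' k : ℕ, c k • X ^ k‖ ≤ ∑' k : ℕ, ‖c k‖ * (alphaR X r) ^ k := by
  obtain ⟨t, hαt, ht⟩ := hradius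
  have hα := alphaR_nonneg X r
  refine norm_tsum_smul_pow_le c X (fun k hck => ?_) ?_
  · have hKk : K ≤ k := not_lt.1 fun hk => hck (hc k hk)
    exact norm_pow_le_alphaR_pow_of_mul_pred_le X r (hKr.trans hKk)
  · exact ht.of_nonneg_of_le (fun k => by positivity) fun k => by gcongr

/-- Let `h(z) = ∑_{k≥K} c_k z^k` (`K ≥ 1`) and `h̃(θ) = ∑_{k≥K} |c_k| θ^k`.  For any
`n×n` complex matrix `X` and any `r ≥ 1` with `K ≥ r(r−1)`, provided `α_r(X)` lies
within the radius of convergence of `h̃`, one has `‖h(X)‖ ≤ h̃(α_r(X))`. -/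
theorem norm_h_le_htilde_alpha {n : ℕ} (c : ℕ → ℂ) (K r : ℕ)
    (hK : 1 ≤ K) (hr : 1 ≤ r) (hc : ∀ k, k < K → c k = 0) (hKr : r * (r - 1) ≤ K)
    (X : Matrix (Fin n) (Fin n) ℂ)
    (hradius : ∃ t : ℝ, alphaR X r < t ∧ Summable fun k : ℕ => ‖c k‖ * t ^ k) :
    ‖∑' k : ℕ, c k • X ^ k‖ ≤ ∑' k : ℕ, ‖c k‖ * (alphaR X r) ^ k :=
  norm_h_le_htilde_alpha_general c K r hc hKr X hradius
end

section
/- For a positive integer m and τ with 1 ≤ τ ≤ m, define π_m(τ) = τ − 1 + 2(⌊m/τ⌋ − δ), where δ = 1 if τ divides m and δ = 0 otherwise. Then min over 1 ≤ τ ≤ m of π_m(τ) is attained at τ = ⌊√(2m)⌋ or τ = ⌈√(2m)⌉. -/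
/-!
For `1 ≤ τ` the cost is `π_m(τ) = τ + 2⌈m/τ⌉ - 3`. Since `τ⌈m/τ⌉ ≥ m`, AM–GM gives
`(τ + 2⌈m/τ⌉)² ≥ 8τ⌈m/τ⌉ ≥ 8m` for every `τ`. With `r = ⌊√(2m)⌋`, a case split on the parity
of `r` and on the position of `2m` relative to `r² + r` produces `τ ∈ {r, r + 1}` and `k ≥ ⌈m/τ⌉`
with `(τ + 2k - 1)² < 8m`; no `σ` can then make `σ + 2⌈m/σ⌉` smaller than `τ + 2k`.
-/

/-- Paterson–Stockmeyer cost `π_m(τ) = τ − 1 + 2(⌊m/τ⌋ − δ_{m,τ})`, where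
`δ_{m,τ} = 1` if `τ ∣ m` and `0` otherwise. -/
def psCost (m τ : ℕ) : ℕ :=
  τ - 1 + 2 * (m / τ - if τ ∣ m then 1 else 0)

/-- Ceiling of the square root of a natural number. -/
def ceilSqrt (n : ℕ) : ℕ :=
  if (Nat.sqrt n) ^ 2 = n then Nat.sqrt n else Nat.sqrt n + 1

theorem psCost_add_three {m τ : ℕ} (hm : 0 < m) (hτ : 0 < τ) :
    psCost m τ + 3 = τ + 2 * (m ⌈/⌉ τ) := by
  obtain ⟨n, rfl⟩ : ∃ n, m = n + 1 := ⟨m - 1, by omega⟩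
  rw [Nat.ceilDiv_eq_add_pred_div, show n + 1 + τ - 1 = n + τ by omega,
    Nat.add_div_right n hτ, psCost, Nat.succ_div]
  split_ifs <;> generalize n / τ = d <;> omega

theorem eight_mul_le_sq_of_le_mul {m τ k : ℕ} (h : m ≤ τ * k) : 8 * m ≤ (τ + 2 * k) ^ 2 := by
  zify at h ⊢
  nlinarith [sq_nonneg ((τ : ℤ) - 2 * k)]

theorem psCost_le_of_le_mul {m τ k σ : ℕ} (hm : 0 < m) (hτ : 0 < τ) (hk : m ≤ τ * k)
    (hv : (τ + 2 * k - 1) ^ 2 < 8 * m) (hσ : 0 < σ) : psCost m τ ≤ psCost m σ := by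
  have hτk : m ⌈/⌉ τ ≤ k := (ceilDiv_le_iff_le_mul hτ).2 hk
  have hσ_lower : 8 * m ≤ (σ + 2 * (m ⌈/⌉ σ)) ^ 2 :=
    eight_mul_le_sq_of_le_mul ((ceilDiv_le_iff_le_mul hσ).1 le_rfl)
  have hlt : τ + 2 * k - 1 < σ + 2 * (m ⌈/⌉ σ) :=
    lt_of_pow_lt_pow_left₀ 2 (Nat.zero_le _) (hv.trans_le hσ_lower)
  have := psCost_add_three hm hτ
  have := psCost_add_three hm hσ
  omega

theorem exists_split_near_sqrt {m r : ℕ} (hm : 0 < m) (hr : r ^ 2 ≤ 2 * m)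
    (hr' : 2 * m < (r + 1) ^ 2) :
    ∃ τ, (τ = r ∨ r ^ 2 < 2 * m ∧ τ = r + 1) ∧ 1 ≤ τ ∧ τ ≤ m ∧
      ∃ k, m ≤ τ * k ∧ (τ + 2 * k - 1) ^ 2 < 8 * m := by
  obtain ⟨q, rfl | rfl⟩ := Nat.even_or_odd' r
  · have hq : 0 < q := Nat.pos_of_ne_zero fun h0 => by subst h0; norm_num at hr'; omega
    rcases (show 2 * m = (2 * q) ^ 2 ∨ (2 * q) ^ 2 < 2 * m ∧ 2 * m ≤ (2 * q) ^ 2 + 2 * q ∨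
        (2 * q) ^ 2 + 2 * q < 2 * m by omega) with h | ⟨h, h'⟩ | h
    · refine ⟨2 * q, Or.inl rfl, by omega, by nlinarith, q, by nlinarith, ?_⟩
      rw [show 2 * q + 2 * q - 1 = 4 * q - 1 by omega]
      have : 4 * q - 1 < 4 * q := by omega
      nlinarith
    · refine ⟨2 * q + 1, Or.inr ⟨h, rfl⟩, by omega, by nlinarith, q, by nlinarith, ?_⟩
      rw [show 2 * q + 1 + 2 * q - 1 = 4 * q by omega]
      nlinarith
    · refine ⟨2 * q, Or.inl rfl, by omega, by nlinarith, q + 1, by nlinarith, ?_⟩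
      rw [show 2 * q + 2 * (q + 1) - 1 = 4 * q + 1 by omega]
      nlinarith
  · rcases le_or_gt (2 * m) ((2 * q + 1) ^ 2 + (2 * q + 1)) with h | h
    · refine ⟨2 * q + 1, Or.inl rfl, by omega, by nlinarith, q + 1, by nlinarith, ?_⟩
      rw [show 2 * q + 1 + 2 * (q + 1) - 1 = 4 * q + 2 by omega]
      have : (2 * q + 1) ^ 2 < 2 * m := by
        refine lt_of_le_of_ne hr fun he => ?_
        have : (2 * q + 1) ^ 2 = 2 * (2 * q ^ 2 + 2 * q) + 1 := by ring
        omega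
      nlinarith
    · refine ⟨2 * q + 1 + 1, Or.inr ⟨by nlinarith, rfl⟩, by omega, by nlinarith, q + 1,
        by nlinarith, ?_⟩
      rw [show 2 * q + 1 + 1 + 2 * (q + 1) - 1 = 4 * q + 3 by omega]
      nlinarith

theorem ceilSqrt_eq_sqrt_add_one {n : ℕ} (h : Nat.sqrt n ^ 2 < n) :
    ceilSqrt n = Nat.sqrt n + 1 :=
  if_neg h.ne

/-- The minimum of `π_m(τ)` over `1 ≤ τ ≤ m` is attained at `τ = ⌊√(2m)⌋` or
`τ = ⌈√(2m)⌉`. -/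
theorem psCost_min_at_sqrt (m : ℕ) (hm : 1 ≤ m) :
    ∃ τ : ℕ, (τ = Nat.sqrt (2 * m) ∨ τ = ceilSqrt (2 * m)) ∧
      τ ∈ Finset.Icc 1 m ∧
      ∀ σ ∈ Finset.Icc 1 m, psCost m τ ≤ psCost m σ := by
  obtain ⟨τ, hτr, hτ, hτm, k, hk, hv⟩ :=
    exists_split_near_sqrt hm (Nat.sqrt_le' (2 * m)) (Nat.lt_succ_sqrt' (2 * m))
  refine ⟨τ, ?_, Finset.mem_Icc.2 ⟨hτ, hτm⟩,
    fun σ hσ => psCost_le_of_le_mul hm hτ hk hv (Finset.mem_Icc.1 hσ).1⟩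
  rcases hτr with rfl | ⟨hlt, rfl⟩
  · exact Or.inl rfl
  · exact Or.inr (ceilSqrt_eq_sqrt_add_one hlt).symm
end

section
/- Define m_i = ⌊(i+3)²/8⌋ for i ≥ 0, and π_m(τ*) as the minimal Paterson–Stockmeyer cost for degree m. Then for every i ≥ 0, ⌈√(8(m_i + 1)) − 3⌉ = i + 1. -/
/-
Since 8 m_i ≤ (i+3)² < 8 (m_i + 1) ≤ (i+4)², the number √(8 (m_i + 1)) lies in (i+3, i+4],
so its ceiling is i + 4; subtracting the integer 3 commutes with the ceiling.
-/

/-- Optimal Paterson–Stockmeyer degrees `m_i = ⌊(i+3)²/8⌋`. -/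
def psDegree (i : ℕ) : ℕ := (i + 3) ^ 2 / 8

theorem ceil_sqrt_eq_of_sq_lt_of_le_sq {n a : ℕ} (h_lt : a ^ 2 < n) (h_le : n ≤ (a + 1) ^ 2) :
    ⌈√(n : ℝ)⌉ = a + 1 := by
  rw [Int.ceil_eq_iff]
  push_cast
  constructor
  · rw [add_sub_cancel_right, Real.lt_sqrt (Nat.cast_nonneg a)]
    exact_mod_cast h_lt
  · rw [Real.sqrt_le_left (by positivity)]
    exact_mod_cast h_le

theorem sq_add_three_lt_eight_mul_psDegree_succ (i : ℕ) : (i + 3) ^ 2 < 8 * (psDegree i + 1) := by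
  have := Nat.lt_div_mul_add (a := (i + 3) ^ 2) (b := 8) (by norm_num)
  unfold psDegree
  omega

theorem eight_mul_psDegree_succ_le_sq_add_four (i : ℕ) : 8 * (psDegree i + 1) ≤ (i + 4) ^ 2 := by
  have h_div : psDegree i * 8 ≤ (i + 3) ^ 2 := Nat.div_mul_le_self _ _
  rcases Nat.eq_zero_or_pos i with rfl | hi
  · decide
  · nlinarith

/-- For every `i ≥ 0`, `⌈√(8(m_i + 1)) − 3⌉ = i + 1`. -/
theorem psDegree_inverse (i : ℕ) :
    ⌈Real.sqrt (8 * (psDegree i + 1)) - 3⌉ = (i : ℤ) + 1 := by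
  have h_ceil : ⌈√((8 * (psDegree i + 1) : ℕ) : ℝ)⌉ = (i + 3 : ℕ) + 1 :=
    ceil_sqrt_eq_of_sq_lt_of_le_sq (sq_add_three_lt_eight_mul_psDegree_succ i)
      (eight_mul_psDegree_succ_le_sq_add_four i)
  push_cast at h_ceil
  rw [show (3 : ℝ) = ((3 : ℤ) : ℝ) by norm_num, Int.ceil_sub_intCast, h_ceil]
  ring
end

section
/- Let X be an n×n complex matrix such that ρ(e^{−X} R(X) − I) < 1, where R is the [m+p/m] Padé approximant to e^z and ρ is the spectral radius, and suppose ρ(X) is less than the smallest modulus of a zero of the denominator of R. Then with h(X) = log(e^{−X} R(X)) (principal matrix logarithm), one has R(X) = e^{X + h(X)}, and X commutes with h(X). -/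
open Filter Topology Asymptotics

/-- The matrix rational function `R(X) = N(X) D(X)⁻¹`. -/
noncomputable def padeEvalMat {n : ℕ} (N D : Polynomial ℂ)
    (X : Matrix (Fin n) (Fin n) ℂ) : Matrix (Fin n) (Fin n) ℂ :=
  Polynomial.aeval X N * (Polynomial.aeval X D)⁻¹

/-- The principal matrix logarithm of `M`, defined by its power series
`log M = ∑_{k≥1} (−1)^{k+1} (M − I)^k / k` (valid when `ρ(M − I) < 1`). -/
noncomputable def principalLog {n : ℕ} (M : Matrix (Fin n) (Fin n) ℂ) :
    Matrix (Fin n) (Fin n) ℂ :=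
  ∑' k : ℕ, ((-1 : ℂ) ^ k / (k + 1)) • (M - 1) ^ (k + 1)

/-!
Everything rests on `exp (log M) = M` for the power-series logarithm when `ρ(M - 1) < 1`: since
`X` commutes with `M = e^{-X} R(X)`, it commutes with `log M`, and then
`e^{X + log M} = e^X e^{log M} = e^X e^{-X} R(X) = R(X)`.

For `exp ∘ log`, Gelfand's formula gives `∑ T^k ‖a^k‖ < ∞` for some `T > 1`. On the disc `‖s‖ < T`
the series `L(s) = log(1 + s a)` may then be differentiated termwise, with `L'(s) (1 + s a) = a`
by the geometric series, so `exp(-L(s)) (1 + s a)` has derivative zero; it is `1` at `s = 0`,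
hence also at `s = 1`.
-/

open NormedSpace Metric
open scoped NNReal

section LogSeries

variable (𝕂 : Type*) {𝔸 : Type*} [Field 𝕂] [Ring 𝔸] [Algebra 𝕂 𝔸] [TopologicalSpace 𝔸]

noncomputable def logOneAdd (a : 𝔸) : 𝔸 :=
  ∑' k : ℕ, ((-1 : 𝕂) ^ k / (k + 1)) • a ^ (k + 1)

variable {𝕂}

theorem logOneAdd_zero : logOneAdd 𝕂 (0 : 𝔸) = 0 := by
  simp [logOneAdd]

variable [IsTopologicalRing 𝔸] [T2Space 𝔸]

theorem Commute.logOneAdd_right {a b : 𝔸} (h : Commute a b) : Commute a (logOneAdd 𝕂 b) :=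
  Commute.tsum_right a fun _ => (h.pow_right _).smul_right _

end LogSeries

section Derivatives

variable {𝕂 𝔸 : Type*} [RCLike 𝕂] [NormedRing 𝔸] [NormedAlgebra 𝕂 𝔸]

theorem norm_smul_pow_le (a : 𝔸) {s : 𝕂} {T : ℝ} (hs : ‖s‖ ≤ T) (k : ℕ) :
    ‖(s • a) ^ k‖ ≤ T ^ k * ‖a ^ k‖ := by
  rw [smul_pow, norm_smul, norm_pow]
  gcongr

theorem hasDerivAt_logOneAdd_term (a : 𝔸) (t : 𝕂) (k : ℕ) :
    HasDerivAt (fun s : 𝕂 => ((-1 : 𝕂) ^ k / (k + 1)) • (s • a) ^ (k + 1))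
      ((-(t • a)) ^ k * a) t := by
  have h := ((hasDerivAt_pow (k + 1) t).const_mul ((-1 : 𝕂) ^ k / (k + 1))).smul_const
    (a ^ (k + 1))
  simp_rw [smul_pow, smul_smul]
  refine h.congr_deriv ?_
  rw [← neg_smul, smul_pow, smul_mul_assoc, ← pow_succ, Nat.add_sub_cancel]
  congr 1
  push_cast
  field_simp
  ring

theorem tsum_pow_neg_smul_mul_mul_one_add {a : 𝔸} {t : 𝕂}
    (h : Summable fun k => (-(t • a)) ^ k) :
    (∑' k, (-(t • a)) ^ k) * a * (1 + t • a) = a := by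
  have hcomm : a * (1 + t • a) = (1 - -(t • a)) * a := by
    rw [sub_neg_eq_add, mul_add, add_mul, mul_smul_comm, smul_mul_assoc, mul_one, one_mul]
  rw [mul_assoc, hcomm, ← mul_assoc, h.tsum_pow_mul_one_sub, one_mul]

variable [CompleteSpace 𝔸]

theorem hasDerivAt_exp_of_commute {f : 𝕂 → 𝔸} {f' : 𝔸} {t : 𝕂} (hf : HasDerivAt f f' t)
    (hcomm : ∀ s, Commute (f t) (f s)) :
    HasDerivAt (fun s => exp (f s)) (exp (f t) * f') t := by
  have hexp : HasFDerivAt exp (1 : 𝔸 →L[𝕂] 𝔸) (f t - f t) := by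
    rw [sub_self]
    exact hasFDerivAt_exp_zero
  have hshift := hexp.comp_hasDerivAt t (hf.sub_const (f t))
  rw [one_apply_eq_self] at hshift
  let +nondep : NormedAlgebra ℚ 𝔸 := .restrictScalars ℚ 𝕂 𝔸
  refine (hshift.const_mul (exp (f t))).congr_of_eventuallyEq (Eventually.of_forall fun s => ?_)
  dsimp only [Function.comp_apply]
  rw [← exp_add_of_commute ((hcomm s).sub_right (Commute.refl _)), add_sub_cancel]

variable {a : 𝔸} {T : ℝ}

theorem summable_pow_neg_smul (ha : Summable fun k => T ^ k * ‖a ^ k‖) {t : 𝕂} (ht : ‖t‖ ≤ T) :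
    Summable fun k => (-(t • a)) ^ k := by
  refine .of_norm_bounded ha fun k => ?_
  rw [← neg_smul]
  exact norm_smul_pow_le a (by rwa [norm_neg]) k

theorem hasDerivAt_logOneAdd_smul (ha : Summable fun k => T ^ k * ‖a ^ k‖) {t : 𝕂}
    (ht : ‖t‖ < T) :
    HasDerivAt (fun s : 𝕂 => logOneAdd 𝕂 (s • a)) ((∑' k, (-(t • a)) ^ k) * a) t := by
  have hbound : ∀ k, ∀ s ∈ ball (0 : 𝕂) T, ‖(-(s • a)) ^ k * a‖ ≤ T ^ k * ‖a ^ k‖ * ‖a‖ := by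
    intro k s hs
    rw [← neg_smul]
    refine (norm_mul_le _ _).trans (mul_le_mul_of_nonneg_right ?_ (norm_nonneg a))
    exact norm_smul_pow_le a (by simpa using (mem_ball_zero_iff.mp hs).le) k
  have h := hasDerivAt_tsum_of_isPreconnected (ha.mul_right ‖a‖) isOpen_ball
    (convex_ball 0 T).isPreconnected (fun k s _ => hasDerivAt_logOneAdd_term a s k) hbound
    (mem_ball_self ((norm_nonneg t).trans_lt ht)) (by simp) (mem_ball_zero_iff.mpr ht)
  rwa [← (summable_pow_neg_smul ha ht.le).tsum_mul_right]

theorem hasDerivAt_exp_neg_logOneAdd_smul_mul (ha : Summable fun k => T ^ k * ‖a ^ k‖) {t : 𝕂}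
    (ht : ‖t‖ < T) :
    HasDerivAt (fun s : 𝕂 => exp (-logOneAdd 𝕂 (s • a)) * (1 + s • a)) 0 t := by
  have hcomm : ∀ s : 𝕂, Commute (logOneAdd 𝕂 (t • a)) (logOneAdd 𝕂 (s • a)) := fun s =>
    (((Commute.refl a).smul_left s).smul_right t).logOneAdd_right.symm.logOneAdd_right
  have hexp := hasDerivAt_exp_of_commute (hasDerivAt_logOneAdd_smul ha ht).neg
    fun s => (hcomm s).neg_left.neg_right
  have hlin : HasDerivAt (fun s : 𝕂 => 1 + s • a) a t := by
    simpa using ((hasDerivAt_id t).smul_const a).const_add 1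
  refine (hexp.mul hlin).congr_deriv ?_
  rw [mul_neg, neg_mul, mul_assoc,
    tsum_pow_neg_smul_mul_mul_one_add (summable_pow_neg_smul ha ht.le), neg_add_cancel]

theorem exp_logOneAdd_of_summable (hT : 1 < T) (ha : Summable fun k => T ^ k * ‖a ^ k‖) :
    exp (logOneAdd 𝕂 a) = 1 + a := by
  have hconst : exp (-logOneAdd 𝕂 a) * (1 + a) = 1 := by
    simpa [logOneAdd_zero] using isOpen_ball.is_const_of_deriv_eq_zero
      (convex_ball (0 : 𝕂) T).isPreconnected
      (fun t ht => (hasDerivAt_exp_neg_logOneAdd_smul_mul ha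
        (mem_ball_zero_iff.mp ht)).differentiableAt.differentiableWithinAt)
      (fun t ht => (hasDerivAt_exp_neg_logOneAdd_smul_mul ha (mem_ball_zero_iff.mp ht)).deriv)
      (mem_ball_zero_iff.mpr (by rwa [norm_one] : ‖(1 : 𝕂)‖ < T)) (mem_ball_self (by linarith))
  let +nondep : NormedAlgebra ℚ 𝔸 := .restrictScalars ℚ 𝕂 𝔸
  calc exp (logOneAdd 𝕂 a) = exp (logOneAdd 𝕂 a) * (exp (-logOneAdd 𝕂 a) * (1 + a)) := by
        rw [hconst, mul_one]
    _ = 1 + a := by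
        rw [← mul_assoc, ← exp_add_of_commute (Commute.refl _).neg_right, add_neg_cancel,
          exp_zero, one_mul]

end Derivatives

section Spectral

variable {A : Type*} [NormedRing A] [NormedAlgebra ℂ A] [CompleteSpace A] {a : A}

theorem eventually_norm_pow_le_of_spectralRadius_lt {r : ℝ≥0} (h : spectralRadius ℂ a < r) :
    ∀ᶠ k in atTop, ‖a ^ k‖ ≤ r ^ k := by
  have hgelfand := spectrum.pow_nnnorm_pow_one_div_tendsto_nhds_spectralRadius a
  filter_upwards [hgelfand.eventually_lt_const h, eventually_ne_atTop 0] with k hk hk0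
  rw [one_div, ENNReal.rpow_inv_lt_iff (by positivity), ENNReal.rpow_natCast] at hk
  exact_mod_cast hk.le

theorem exists_summable_pow_mul_norm_pow (h : spectralRadius ℂ a < 1) :
    ∃ T : ℝ, 1 < T ∧ Summable fun k => T ^ k * ‖a ^ k‖ := by
  obtain ⟨s, hρs, hs1⟩ := ENNReal.lt_iff_exists_nnreal_btwn.mp h
  obtain ⟨r, hsr, hr1⟩ := exists_between (ENNReal.coe_lt_one_iff.mp hs1)
  have hr0 : (0 : ℝ) < r := s.coe_nonneg.trans_lt (by exact_mod_cast hsr)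
  refine ⟨(r : ℝ)⁻¹, one_lt_inv₀ hr0 |>.mpr hr1, ?_⟩
  refine .of_norm_bounded_eventually_nat (g := fun k => ((s : ℝ) / r) ^ k)
    (summable_geometric_of_lt_one (by positivity) ((div_lt_one hr0).mpr hsr)) ?_
  filter_upwards [eventually_norm_pow_le_of_spectralRadius_lt hρs] with k hk
  rw [Real.norm_of_nonneg (by positivity), inv_pow, div_pow, inv_mul_eq_div]
  gcongr

theorem exp_logOneAdd_of_forall_norm_lt_one (h : ∀ μ ∈ spectrum ℂ a, ‖μ‖ < 1) :
    exp (logOneAdd ℂ a) = 1 + a := by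
  nontriviality A
  have hρ : spectralRadius ℂ a < 1 := by
    simpa using spectrum.spectralRadius_lt_of_forall_lt a (r := 1)
      fun μ hμ => by simpa [← NNReal.coe_lt_coe] using h μ hμ
  obtain ⟨T, hT, hsum⟩ := exists_summable_pow_mul_norm_pow hρ
  exact exp_logOneAdd_of_summable hT hsum

end Spectral

theorem Commute.ringInverse_right {M₀ : Type*} [MonoidWithZero M₀] {a b : M₀}
    (h : Commute a b) : Commute a (Ring.inverse b) := by
  by_cases hb : IsUnit b
  · obtain ⟨u, rfl⟩ := hb
    rw [Ring.inverse_unit]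
    exact h.units_inv_right
  · rw [Ring.inverse_non_unit _ hb]
    exact Commute.zero_right a

theorem Matrix.exp_logOneAdd {ι : Type*} [Fintype ι] [DecidableEq ι] {A : Matrix ι ι ℂ}
    (h : ∀ μ ∈ spectrum ℂ A, ‖μ‖ < 1) : exp (logOneAdd ℂ A) = 1 + A :=
  open scoped Matrix.Norms.Operator in exp_logOneAdd_of_forall_norm_lt_one h

theorem principalLog_eq_logOneAdd {n : ℕ} (M : Matrix (Fin n) (Fin n) ℂ) :
    principalLog M = logOneAdd ℂ (M - 1) :=
  rfl

theorem commute_padeEvalMat {n : ℕ} (N D : Polynomial ℂ) (X : Matrix (Fin n) (Fin n) ℂ) :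
    Commute X (padeEvalMat N D X) := by
  have hX : ∀ q : Polynomial ℂ, Commute X (Polynomial.aeval X q) := fun q => by
    simpa using (Commute.all Polynomial.X q).map (Polynomial.aeval X)
  rw [padeEvalMat, Matrix.nonsing_inv_eq_ringInverse]
  exact (hX N).mul_right (hX D).ringInverse_right

theorem pade_backward_error_matrix_general {n : ℕ}
    (N D : Polynomial ℂ)
    (X : Matrix (Fin n) (Fin n) ℂ)
    (hρ : ∀ μ ∈ spectrum ℂ
        (NormedSpace.exp (-X) * padeEvalMat N D X - 1), ‖μ‖ < 1) :
    NormedSpace.exp (X + principalLog (NormedSpace.exp (-X) * padeEvalMat N D X)) =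
        padeEvalMat N D X ∧
      X * principalLog (NormedSpace.exp (-X) * padeEvalMat N D X) =
        principalLog (NormedSpace.exp (-X) * padeEvalMat N D X) * X := by
  set M := NormedSpace.exp (-X) * padeEvalMat N D X
  have hXM : Commute X M :=
    ((Commute.refl X).neg_right.exp_right).mul_right (commute_padeEvalMat N D X)
  have hXlog : Commute X (principalLog M) := by
    rw [principalLog_eq_logOneAdd]
    exact (hXM.sub_right (Commute.one_right X)).logOneAdd_right
  have hlog : exp (principalLog M) = M := by
    rw [principalLog_eq_logOneAdd, Matrix.exp_logOneAdd hρ, add_sub_cancel]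
  refine ⟨?_, hXlog.eq⟩
  rw [Matrix.exp_add_of_commute _ _ hXlog, hlog, ← mul_assoc,
    ← Matrix.exp_add_of_commute _ _ (Commute.refl X).neg_right, add_neg_cancel, exp_zero, one_mul]

/-- Let `R = N/D` be the `[m+p/m]` Padé approximant to `e^z`, and let `X` be such that
`ρ(e^{−X} R(X) − I) < 1` and `ρ(X)` is smaller than the smallest modulus of a zero of
`D`.  Then, with `h(X) = log(e^{−X} R(X))` (principal logarithm),
`R(X) = e^{X + h(X)}` and `X` commutes with `h(X)`. -/
theorem pade_backward_error_matrix {n : ℕ} (m p : ℕ)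
    (N D : Polynomial ℂ) (hN : N.natDegree ≤ m + p) (hD : D.natDegree ≤ m)
    (hD0 : D.eval 0 = 1)
    (hPade : (fun z : ℂ => Complex.exp z - N.eval z / D.eval z)
      =O[𝓝[≠] (0 : ℂ)] fun z => z ^ (2 * m + p + 1))
    (X : Matrix (Fin n) (Fin n) ℂ)
    (hpoles : ∀ μ ∈ spectrum ℂ X, ∀ z : ℂ, D.eval z = 0 → ‖μ‖ < ‖z‖)
    (hρ : ∀ μ ∈ spectrum ℂ
        (NormedSpace.exp (-X) * padeEvalMat N D X - 1), ‖μ‖ < 1) :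
    NormedSpace.exp (X + principalLog (NormedSpace.exp (-X) * padeEvalMat N D X)) =
        padeEvalMat N D X ∧
      X * principalLog (NormedSpace.exp (-X) * padeEvalMat N D X) =
        principalLog (NormedSpace.exp (-X) * padeEvalMat N D X) * X :=
  pade_backward_error_matrix_general N D X hρ
end
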